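/- For every integer n ≥ 3 there exists a polynomial π_n with rational coefficients in variables X₀, X₁, …, X_{n−3} such that: (i) for every smooth θ : ℝ → ℝ and every x ∈ ℝ, 𝒮_n^θ(x) = π_n(θ(x), θ'(x), …, θ^{(n−3)}(x)); and (ii) π_n is isobaric of weight n−1, i.e. the identity π_n(λ²·X₀, λ³·X₁, …, λ^{n−1}·X_{n−3}) = λ^{n−1}·π_n(X₀, X₁, …, X_{n−3}) holds identically in λ and the variables X_i. -/

import Mathlib

/-!
The fundamental pair has Wronskian `1`, so `h_x' = u⁻²` with `u = f_{x,1}`, and `𝒮_n^θ(x)` is the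
`(n-1)`-st derivative of `u⁻²` at `x`. Along a solution of `u'' + θu = 0`, differentiation acts
on polynomials in `u, u⁻¹, u', θ, θ', …` as the derivation `u ↦ u'`, `u⁻¹ ↦ -u'u⁻²`,
`u' ↦ -θu`, `θ^{(r)} ↦ θ^{(r+1)}`, which raises by one the weight giving `u, u⁻¹` weight `0`,
`u'` weight `1` and `θ^{(r)}` weight `r + 2`. So the `k`-th derivative of `u⁻²` is a polynomial
isobaric of weight `k`; at `x`, where `u = 1` and `u' = 0`, only a polynomial in
`θ(x), …, θ^{(k-2)}(x)` isobaric of weight `k` survives.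
-/

noncomputable section

/-- `g_R(t) = -(R/π)·log(1 - (π/R)·t)`. -/
def gR (R t : ℝ) : ℝ := -(R / Real.pi) * Real.log (1 - (Real.pi / R) * t)

/-- `f` is a (smooth) solution of `f'' + θ·f = 0`. -/
def IsSolution (θ f : ℝ → ℝ) : Prop :=
  ContDiff ℝ (⊤ : ℕ∞) f ∧ ∀ t, deriv (deriv f) t + θ t * f t = 0

/-- `f₁, f₂` is the fundamental pair of solutions of `f'' + θ·f = 0` at `x`:
`f₁(x) = f₂'(x) = 1`, `f₂(x) = f₁'(x) = 0`. -/
def IsFundPair (θ : ℝ → ℝ) (x : ℝ) (f₁ f₂ : ℝ → ℝ) : Prop :=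
  IsSolution θ f₁ ∧ IsSolution θ f₂ ∧
  f₁ x = 1 ∧ deriv f₁ x = 0 ∧ f₂ x = 0 ∧ deriv f₂ x = 1

/-- The `n`-th `g_R`-Schwarzian `𝒮_n^{θ,g_R}(x)`, computed from the fundamental pair
`f₁, f₂` at `x`: the `n`-th derivative at `t = 0` of `t ↦ h_x(x + g_R(t))`,
where `h_x = f₂/f₁`. -/
def SchR (R x : ℝ) (f₁ f₂ : ℝ → ℝ) (n : ℕ) : ℝ :=
  iteratedDeriv n (fun t => f₂ (x + gR R t) / f₁ (x + gR R t)) 0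

/-- The determinant `𝒟_n^{θ,g_R}(x)` of the `n×n` Hankel matrix with `(i,j)` entry
`𝒮_{i+j-1}^{θ,g_R}(x)/(i+j-1)!`. -/
def DetR (R x : ℝ) (f₁ f₂ : ℝ → ℝ) (n : ℕ) : ℝ :=
  (Matrix.of fun i j : Fin n =>
    SchR R x f₁ f₂ (i.1 + j.1 + 1) / (Nat.factorial (i.1 + j.1 + 1) : ℝ)).det

/-- Hypothesis (H_R): `f₁, f₂` are linearly independent solutions of `f'' + θ·f = 0`
(constant Wronskian `W = f₁f₂' - f₁'f₂ ≠ 0`) and `h = f₂/f₁` admits a meromorphic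
extension `H` to the strip `{|Im z| < R}` (holomorphic off the real zeros of `f₁`,
with poles at those zeros) which satisfies `W·Im H(z)·Im z > 0` for `0 < Im z < R`. -/
def HypR (θ : ℝ → ℝ) (R : ℝ) : Prop :=
  ∃ (f₁ f₂ : ℝ → ℝ) (H : ℂ → ℂ),
    IsSolution θ f₁ ∧ IsSolution θ f₂ ∧
    f₁ 0 * deriv f₂ 0 - deriv f₁ 0 * f₂ 0 ≠ 0 ∧
    (∀ t : ℝ, f₁ t ≠ 0 → H t = ((f₂ t / f₁ t : ℝ) : ℂ)) ∧
    DifferentiableOn ℂ H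
      {z : ℂ | |z.im| < R ∧ ∀ t : ℝ, f₁ t = 0 → z ≠ (t : ℂ)} ∧
    (∀ t : ℝ, f₁ t = 0 →
      Filter.Tendsto (fun z => ‖H z‖) (nhdsWithin (t : ℂ) {(t : ℂ)}ᶜ) Filter.atTop) ∧
    (∀ z : ℂ, 0 < z.im → z.im < R →
      0 < (f₁ 0 * deriv f₂ 0 - deriv f₁ 0 * f₂ 0) * (H z).im * z.im)

/-- `(i,j)` entry (1-based, clamped to ℕ) of the matrix `T(f,n)(t)`:
`f^{(j-i)}(t)/(j-i)!` if `i ≤ j`, and `0` otherwise. -/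
def Tentry (f : ℝ → ℝ) (t : ℝ) (i j : ℕ) : ℝ :=
  if i ≤ j then iteratedDeriv (j - i) f t / (Nat.factorial (j - i) : ℝ) else 0

end

open MvPolynomial Filter Topology Set

namespace MvPolynomial.IsWeightedHomogeneous

variable {σ τ R S : Type*} [CommSemiring R] [CommSemiring S] [Algebra R S]
  {w : σ → ℕ} {m : ℕ} {p : MvPolynomial σ R}

theorem aeval_congr (hp : p.IsWeightedHomogeneous w m) {f g : σ → S}
    (hfg : ∀ i, w i ≤ m → f i = g i) : aeval f p = aeval g p := by
  refine eval₂_congr _ _ _ fun {i c} hi hc => hfg i ?_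
  rw [← hp hc]
  exact Finsupp.le_weight_of_ne_zero (fun _ => Nat.zero_le _) (Finsupp.mem_support_iff.mp hi)

theorem aeval {w' : τ → ℕ} (hp : p.IsWeightedHomogeneous w m)
    {f : σ → MvPolynomial τ R} (hf : ∀ i, (f i).IsWeightedHomogeneous w' (w i)) :
    (MvPolynomial.aeval f p).IsWeightedHomogeneous w' m := by
  induction hp using IsWeightedHomogeneous.induction_on with
  | zero => simpa using isWeightedHomogeneous_zero R w' m
  | add p q _ _ hp hq => simpa using hp.add hq
  | monomial d r hd =>
    rw [aeval_monomial, ← hd, Finsupp.weight_apply, algebraMap_eq]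
    exact (IsWeightedHomogeneous.prod _ _ _ fun i _ => (hf i).pow (d i)).C_mul r

theorem aeval_pow_mul (hp : p.IsWeightedHomogeneous w m) (c : S) (x : σ → S) :
    MvPolynomial.aeval (fun i => c ^ w i * x i) p = c ^ m * MvPolynomial.aeval x p := by
  induction hp using IsWeightedHomogeneous.induction_on with
  | zero => simp
  | add p q _ _ hp hq => simp [hp, hq, mul_add]
  | monomial d r hd =>
    simp only [aeval_monomial, ← hd, Finsupp.weight_apply, Finsupp.prod, Finsupp.sum, mul_pow,
      Finset.prod_mul_distrib, ← pow_mul, Finset.prod_pow_eq_pow_sum, smul_eq_mul, mul_comm (w _)]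
    ring

theorem mkDerivation {k : ℕ} {f : σ → MvPolynomial σ R}
    (hf : ∀ i, (f i).IsWeightedHomogeneous w (w i + k)) (hp : p.IsWeightedHomogeneous w m) :
    (MvPolynomial.mkDerivation R f p).IsWeightedHomogeneous w (m + k) := by
  induction hp using IsWeightedHomogeneous.induction_on with
  | zero => simpa using isWeightedHomogeneous_zero R w (m + k)
  | add p q _ _ hp hq => simpa using hp.add hq
  | monomial d r hd =>
    rw [mkDerivation_monomial, smul_eq_C_mul]
    refine (IsWeightedHomogeneous.sum _ _ _ fun i hi => ?_).C_mul r
    have hdi : d i ≠ 0 := Finsupp.mem_support_iff.mp hi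
    dsimp only
    rw [smul_eq_mul, ← hd, ← Finsupp.weight_sub_single_add hdi, add_assoc]
    exact (isWeightedHomogeneous_monomial w _ _ rfl).mul (hf i)

end MvPolynomial.IsWeightedHomogeneous

namespace MvPolynomial

variable {σ R 𝕜 : Type*} [CommSemiring R] [NontriviallyNormedField 𝕜] [Algebra R 𝕜]
  (D : Derivation R (MvPolynomial σ R) (MvPolynomial σ R)) {s : 𝕜 → σ → 𝕜}

theorem hasDerivAt_aeval_of_derivation {t : 𝕜}
    (hs : ∀ i, HasDerivAt (fun y => s y i) (aeval (s t) (D (X i))) t) (p : MvPolynomial σ R) :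
    HasDerivAt (fun y => aeval (s y) p) (aeval (s t) (D p)) t := by
  induction p using MvPolynomial.induction_on with
  | C a => simpa [derivation_C] using hasDerivAt_const t (algebraMap R 𝕜 a)
  | add p q hp hq => simpa using hp.fun_add hq
  | mul_X p i hp =>
    simpa [Derivation.leibniz, add_comm, mul_comm] using hp.fun_mul (hs i)

theorem iteratedDeriv_aeval_eqOn {U : Set 𝕜} (hU : IsOpen U)
    (hs : ∀ t ∈ U, ∀ i, HasDerivAt (fun y => s y i) (aeval (s t) (D (X i))) t)
    (p : MvPolynomial σ R) (k : ℕ) :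
    EqOn (iteratedDeriv k fun y => aeval (s y) p) (fun y => aeval (s y) (D^[k] p)) U := by
  induction k with
  | zero => simp [EqOn]
  | succ k ih =>
    intro t ht
    rw [iteratedDeriv_succ, (ih.eventuallyEq_of_mem (hU.mem_nhds ht)).deriv_eq,
      Function.iterate_succ_apply']
    exact (hasDerivAt_aeval_of_derivation D (hs t ht) _).deriv

end MvPolynomial

namespace IsSolution

variable {θ f g : ℝ → ℝ}

theorem differentiable (hf : IsSolution θ f) : Differentiable ℝ f :=
  hf.1.differentiable (by simp)

theorem hasDerivAt_deriv (hf : IsSolution θ f) (t : ℝ) :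
    HasDerivAt (deriv f) (-(θ t * f t)) t := by
  rw [← eq_neg_of_add_eq_zero_left (hf.2 t)]
  exact ((contDiff_infty_iff_deriv.mp hf.1).2.differentiable (by simp) t).hasDerivAt

theorem wronskian_eq (hf : IsSolution θ f) (hg : IsSolution θ g) (t x : ℝ) :
    f t * deriv g t - deriv f t * g t = f x * deriv g x - deriv f x * g x := by
  have hW : ∀ y, HasDerivAt (fun z => f z * deriv g z - deriv f z * g z) 0 y := fun y => by
    refine (((hf.differentiable y).hasDerivAt.fun_mul (hg.hasDerivAt_deriv y)).fun_sub
      ((hf.hasDerivAt_deriv y).fun_mul (hg.differentiable y).hasDerivAt)).congr_deriv ?_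
    ring
  exact is_const_of_deriv_eq_zero (fun y => (hW y).differentiableAt) (fun y => (hW y).deriv) t x

end IsSolution

theorem IsFundPair.hasDerivAt_div {θ f₁ f₂ : ℝ → ℝ} {x t : ℝ} (h : IsFundPair θ x f₁ f₂)
    (ht : f₁ t ≠ 0) : HasDerivAt (fun y => f₂ y / f₁ y) ((f₁ t)⁻¹ ^ 2) t := by
  obtain ⟨h₁, h₂, hx₁, hx₁', hx₂, hx₂'⟩ := h
  have hW := h₁.wronskian_eq h₂ t x
  rw [hx₁, hx₁', hx₂, hx₂'] at hW
  refine ((h₂.differentiable t).hasDerivAt.fun_div (h₁.differentiable t).hasDerivAt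
    ht).congr_deriv ?_
  rw [inv_pow, ← one_div]
  congr 1
  linarith

inductive JetVar
  | sol
  | solInv
  | solDeriv
  | coeff (r : ℕ)

namespace JetVar

def weight : JetVar → ℕ
  | sol => 0
  | solInv => 0
  | solDeriv => 1
  | coeff r => r + 2

noncomputable def derivX : JetVar → MvPolynomial JetVar ℚ
  | sol => X solDeriv
  | solInv => -(X solDeriv * X solInv ^ 2)
  | solDeriv => -(X (coeff 0) * X sol)
  | coeff r => X (coeff (r + 1))

noncomputable def D : Derivation ℚ (MvPolynomial JetVar ℚ) (MvPolynomial JetVar ℚ) :=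
  mkDerivation ℚ derivX

noncomputable def eval (θ u : ℝ → ℝ) (t : ℝ) : JetVar → ℝ
  | sol => u t
  | solInv => (u t)⁻¹
  | solDeriv => deriv u t
  | coeff r => iteratedDeriv r θ t

theorem isWeightedHomogeneous_derivX (v : JetVar) :
    (derivX v).IsWeightedHomogeneous weight (weight v + 1) := by
  have hX := isWeightedHomogeneous_X ℚ weight
  cases v with
  | sol => exact hX solDeriv
  | solInv => exact ((hX solDeriv).mul ((hX solInv).pow 2)).neg
  | solDeriv => exact ((hX (coeff 0)).mul (hX sol)).neg
  | coeff r => exact hX (coeff (r + 1))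

theorem isWeightedHomogeneous_D_iterate (k : ℕ) :
    (D^[k] (X solInv ^ 2)).IsWeightedHomogeneous weight k := by
  induction k with
  | zero => simpa [weight] using (isWeightedHomogeneous_X ℚ weight solInv).pow 2
  | succ k ih =>
    rw [Function.iterate_succ_apply']
    exact ih.mkDerivation isWeightedHomogeneous_derivX

theorem iteratedDeriv_inv_sq {θ u : ℝ → ℝ} (hθ : ContDiff ℝ (⊤ : ℕ∞) θ) (hu : IsSolution θ u)
    (k : ℕ) {t : ℝ} (ht : u t ≠ 0) :
    iteratedDeriv k (fun y => (u y)⁻¹ ^ 2) t = aeval (eval θ u t) (D^[k] (X solInv ^ 2)) := by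
  have hU : IsOpen {y | u y ≠ 0} := isOpen_ne_fun hu.differentiable.continuous continuous_const
  have heval : (fun y => (u y)⁻¹ ^ 2) =
      fun y => aeval (eval θ u y) (X solInv ^ 2 : MvPolynomial JetVar ℚ) := by
    simp [eval]
  rw [heval]
  refine iteratedDeriv_aeval_eqOn D hU (fun y hy v => ?_) _ k ht
  have hu' := (hu.differentiable y).hasDerivAt
  cases v with
  | sol => simpa [D, derivX, eval] using hu'
  | solInv =>
    refine (hu'.fun_inv hy).congr_deriv ?_
    simp only [D, mkDerivation_X, derivX, map_neg, map_mul, aeval_X, eval, map_pow, inv_pow]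
    field_simp
  | solDeriv => simpa [D, derivX, eval] using hu.hasDerivAt_deriv y
  | coeff r =>
    simpa [D, derivX, eval, iteratedDeriv_succ] using
      (hθ.differentiable_iteratedDeriv r (by exact_mod_cast WithTop.coe_lt_top r) y).hasDerivAt

noncomputable def specialize (N : ℕ) : JetVar → MvPolynomial (Fin N) ℚ
  | sol => 1
  | solInv => 1
  | solDeriv => 0
  | coeff r => if h : r < N then X ⟨r, h⟩ else 0

theorem isWeightedHomogeneous_specialize (N : ℕ) (v : JetVar) :
    (specialize N v).IsWeightedHomogeneous (fun i : Fin N => i.1 + 2) (weight v) := by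
  cases v with
  | sol => exact isWeightedHomogeneous_one ℚ _
  | solInv => exact isWeightedHomogeneous_one ℚ _
  | solDeriv => exact isWeightedHomogeneous_zero ℚ _ _
  | coeff r =>
    simp only [specialize, weight]
    split_ifs
    · exact isWeightedHomogeneous_X ℚ _ _
    · exact isWeightedHomogeneous_zero ℚ _ _

end JetVar

/-- `schwarzianPoly k` is `π_{k+1}`. -/
noncomputable def schwarzianPoly (k : ℕ) : MvPolynomial (Fin (k - 1)) ℚ :=
  aeval (JetVar.specialize (k - 1)) (JetVar.D^[k] (X JetVar.solInv ^ 2))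

theorem isWeightedHomogeneous_schwarzianPoly (k : ℕ) :
    (schwarzianPoly k).IsWeightedHomogeneous (fun i => i.1 + 2) k :=
  (JetVar.isWeightedHomogeneous_D_iterate k).aeval (JetVar.isWeightedHomogeneous_specialize _)

theorem IsFundPair.iteratedDeriv_succ_div {θ f₁ f₂ : ℝ → ℝ} {x : ℝ}
    (hθ : ContDiff ℝ (⊤ : ℕ∞) θ) (h : IsFundPair θ x f₁ f₂) (k : ℕ) :
    iteratedDeriv (k + 1) (fun t => f₂ t / f₁ t) x =
      aeval (fun i : Fin (k - 1) => iteratedDeriv i.1 θ x) (schwarzianPoly k) := by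
  have ⟨h₁, _, hx₁, hx₁', _⟩ := h
  have hU : IsOpen {y | f₁ y ≠ 0} := isOpen_ne_fun h₁.differentiable.continuous continuous_const
  have hx : f₁ x ≠ 0 := by simp [hx₁]
  have hderiv : deriv (fun t => f₂ t / f₁ t) =ᶠ[𝓝 x] fun t => (f₁ t)⁻¹ ^ 2 :=
    eventually_of_mem (hU.mem_nhds hx) fun t ht => (h.hasDerivAt_div ht).deriv
  rw [iteratedDeriv_succ', hderiv.iteratedDeriv_eq, JetVar.iteratedDeriv_inv_sq hθ h₁ k hx,
    schwarzianPoly, comp_aeval_apply]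
  refine (JetVar.isWeightedHomogeneous_D_iterate k).aeval_congr fun v hv => ?_
  cases v with
  | sol => simp [JetVar.eval, JetVar.specialize, hx₁]
  | solInv => simp [JetVar.eval, JetVar.specialize, hx₁]
  | solDeriv => simp [JetVar.eval, JetVar.specialize, hx₁']
  | coeff r =>
    have hr : r < k - 1 := by simp only [JetVar.weight] at hv; omega
    simp [JetVar.eval, JetVar.specialize, hr]

theorem stmt8_general (n : ℕ) :
    ∃ P : MvPolynomial (Fin (n - 2)) ℚ,
      (∀ θ : ℝ → ℝ, ContDiff ℝ (⊤ : ℕ∞) θ →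
        ∀ (x : ℝ) (f₁ f₂ : ℝ → ℝ), IsFundPair θ x f₁ f₂ →
          iteratedDeriv n (fun t => f₂ t / f₁ t) x =
            MvPolynomial.aeval (fun i : Fin (n - 2) => iteratedDeriv i.1 θ x) P) ∧
      (∀ (lam : ℝ) (X : Fin (n - 2) → ℝ),
        MvPolynomial.aeval (fun i : Fin (n - 2) => lam ^ (i.1 + 2) * X i) P =
          lam ^ (n - 1) * MvPolynomial.aeval X P) := by
  cases n with
  | zero => exact ⟨0, fun θ _ x f₁ f₂ ⟨_, _, _, _, hx₂, _⟩ => by simp [hx₂], fun _ _ => by simp⟩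
  | succ k =>
    exact ⟨schwarzianPoly k, fun θ hθ x f₁ f₂ h => h.iteratedDeriv_succ_div hθ k,
      (isWeightedHomogeneous_schwarzianPoly k).aeval_pow_mul⟩

/-- For every `n ≥ 3` there is a polynomial `π_n ∈ ℚ[X₀,…,X_{n-3}]` such
that (i) `𝒮_n^θ(x) = π_n(θ(x), θ'(x), …, θ^{(n-3)}(x))` for every smooth θ and every
`x`, and (ii) `π_n` is isobaric of weight `n-1`:
`π_n(λ²X₀, λ³X₁, …, λ^{n-1}X_{n-3}) = λ^{n-1}·π_n(X₀, …, X_{n-3})`. -/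
theorem stmt8 (n : ℕ) (hn : 3 ≤ n) :
    ∃ P : MvPolynomial (Fin (n - 2)) ℚ,
      (∀ θ : ℝ → ℝ, ContDiff ℝ (⊤ : ℕ∞) θ →
        ∀ (x : ℝ) (f₁ f₂ : ℝ → ℝ), IsFundPair θ x f₁ f₂ →
          iteratedDeriv n (fun t => f₂ t / f₁ t) x =
            MvPolynomial.aeval (fun i : Fin (n - 2) => iteratedDeriv i.1 θ x) P) ∧
      (∀ (lam : ℝ) (X : Fin (n - 2) → ℝ),
        MvPolynomial.aeval (fun i : Fin (n - 2) => lam ^ (i.1 + 2) * X i) P =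
          lam ^ (n - 1) * MvPolynomial.aeval X P) :=
  stmt8_general n
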